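/- Preservation of independence under conjunction with state-invariant constraints: let W ⊆ 𝓢 be nonempty, z ∈ 𝓢∖W, and ℓ₁,…,ℓ_r literals over variables in 𝓢∖(W ∪ {z}), with Λ_r = □(ℓ₁ ∧ ⋯ ∧ ℓ_r). If W is independent in φ, then W is independent in φ ∧ Λ_r. -/
import Mathlib


open Classical

/-- Syntax of LTL formulae over variable type `V`. -/
inductive LTL (V : Type) : Type
  | tt : LTL V
  | var : V → LTL V
  | neg : LTL V → LTL V
  | conj : LTL V → LTL V → LTL V
  | next : LTL V → LTL V
  | untl : LTL V → LTL V → LTL V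

namespace LTL

def rename {V : Type} (f : V → V) : LTL V → LTL V
  | tt => tt
  | var v => var (f v)
  | neg φ => neg (rename f φ)
  | conj φ ψ => conj (rename f φ) (rename f ψ)
  | next φ => next (rename f φ)
  | untl φ ψ => untl (rename f φ) (rename f ψ)

def vars {V : Type} : LTL V → Set V
  | tt => ∅
  | var v => {v}
  | neg φ => vars φ
  | conj φ ψ => vars φ ∪ vars ψ
  | next φ => vars φ
  | untl φ ψ => vars φ ∪ vars ψ

/-- The "always" operator, defined from until. -/
def box {V : Type} (φ : LTL V) : LTL V := neg (untl tt (neg φ))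

end LTL

/-- An (infinite) trace: each state is a set of variables (those true there). -/
abbrev Trace (V : Type) := ℕ → Set V

def Trace.shift {V : Type} (α : Trace V) (k : ℕ) : Trace V := fun i => α (i + k)

/-- Standard LTL satisfaction. -/
def Sat {V : Type} (α : Trace V) : LTL V → Prop
  | .tt => True
  | .var v => v ∈ α 0
  | .neg φ => ¬ Sat α φ
  | .conj φ ψ => Sat α φ ∧ Sat α ψ
  | .next φ => Sat (α.shift 1) φ
  | .untl φ ψ => ∃ k, Sat (α.shift k) ψ ∧ ∀ j < k, Sat (α.shift j) φ

/-- The projection formula `φ′_W`: rename every variable in `W` to its primed copy. -/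
noncomputable def projFormula {V : Type} (prime : V → V) (W : Set V) (φ : LTL V) : LTL V :=
  φ.rename (fun v => if v ∈ W then prime v else v)

/-- Projection of a trace over `E ∪ W`: keep environment variables and variables in `W`. -/
def projT {V : Type} (E W : Set V) (α : Trace V) : Trace V :=
  fun i => (α i ∩ E) ∪ (α i ∩ W)

/-- Projection of a set of traces. -/
def projS {V : Type} (E W : Set V) (Sig : Set (Trace V)) : Set (Trace V) :=
  (projT E W) '' Sig

/-- Natural join of two sets of traces over `E ∪ W₁` and `E ∪ W₂`:
traces over `E ∪ W₁ ∪ W₂` whose projections lie in the respective sets. -/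
def Join {V : Type} (E W₁ W₂ : Set V) (S₁ S₂ : Set (Trace V)) : Set (Trace V) :=
  {α | (∀ i, α i ⊆ E ∪ W₁ ∪ W₂) ∧ projT E W₁ α ∈ S₁ ∧ projT E W₂ α ∈ S₂}

/-- A set of traces is "over `E ∪ W`" if every state of every trace only uses those variables. -/
def TracesOver {V : Type} (E W : Set V) (Sig : Set (Trace V)) : Prop :=
  ∀ α ∈ Sig, ∀ i, α i ⊆ E ∪ W

/-- `Σ_φ`: the set of traces over `E ∪ S` that model `φ`. -/
def ModelsOver {V : Type} (E S : Set V) (φ : LTL V) : Set (Trace V) :=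
  {α | Sat α φ ∧ ∀ i, α i ⊆ E ∪ S}

/-- `W ⊆ S` is independent in `φ`:  `(Σ_φ ↾ W) ⋈ (Σ_φ ↾ (S \ W)) = Σ_φ`. -/
def Indep {V : Type} (E S : Set V) (φ : LTL V) (W : Set V) : Prop :=
  Join E W (S \ W) (projS E W (ModelsOver E S φ)) (projS E (S \ W) (ModelsOver E S φ))
    = ModelsOver E S φ

/-- A literal: a variable together with a polarity. -/
def LTL.lit {V : Type} (p : V × Bool) : LTL V :=
  if p.2 then LTL.var p.1 else LTL.neg (LTL.var p.1)

/-- Conjunction of a list of formulae. -/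
def LTL.bigConj {V : Type} (l : List (LTL V)) : LTL V :=
  l.foldr LTL.conj LTL.tt

lemma sat_congr {V : Type} (ψ : LTL V) : ∀ (α β : Trace V),
    (∀ i v, v ∈ ψ.vars → (v ∈ α i ↔ v ∈ β i)) → (Sat α ψ ↔ Sat β ψ) := by
  induction ψ with
  | tt => intro α β h; simp [Sat]
  | var v => intro α β h; exact h 0 v (Set.mem_singleton _)
  | neg φ ih =>
    intro α β h
    simp only [Sat]
    exact not_congr (ih α β h)
  | conj φ ψ ihφ ihψ =>
    intro α β h
    simp only [Sat]
    exact and_congr (ihφ _ _ fun i v hv => h i v (Or.inl hv))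
      (ihψ _ _ fun i v hv => h i v (Or.inr hv))
  | next φ ih =>
    intro α β h
    simp only [Sat]
    exact ih _ _ fun i v hv => h (i + 1) v hv
  | untl φ ψ ihφ ihψ =>
    intro α β h
    simp only [Sat]
    exact exists_congr fun k =>
      and_congr (ihψ _ _ fun i v hv => h (i + k) v (Or.inr hv))
        (forall_congr' fun j => imp_congr_right fun _ =>
          ihφ _ _ fun i v hv => h (i + j) v (Or.inl hv))

lemma vars_lit {V : Type} (p : V × Bool) : (LTL.lit p).vars = {p.1} := by
  cases p with | mk v b => cases b <;> simp [LTL.lit, LTL.vars]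

lemma vars_bigConj_lit {V : Type} (L : List (V × Bool)) :
    (LTL.bigConj (L.map LTL.lit)).vars ⊆ {v | ∃ p ∈ L, p.1 = v} := by
  induction L with
  | nil => simp [LTL.bigConj, LTL.vars]
  | cons p L ih =>
    intro v hv
    rcases hv with hv | hv
    · rw [vars_lit] at hv
      exact ⟨p, by simp, hv.symm⟩
    · obtain ⟨q, hq, hqv⟩ := ih hv
      exact ⟨q, List.mem_cons_of_mem _ hq, hqv⟩

lemma mem_projT {V : Type} {E W' : Set V} {α : Trace V} {i : ℕ} {v : V} :
    v ∈ projT E W' α i ↔ v ∈ α i ∧ (v ∈ E ∨ v ∈ W') := by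
  simp only [projT, Set.mem_union, Set.mem_inter_iff]; tauto

/-- independence is preserved under conjunction with `□` of a
conjunction of literals over variables in `S ∖ (W ∪ {z})`. -/
theorem stmt16 {V : Type} (En Sy : Set V) (hdis : Disjoint En Sy)
    (φ : LTL V) (hvars : φ.vars ⊆ En ∪ Sy)
    (W : Set V) (hW : W ⊆ Sy) (hWne : W.Nonempty)
    (z : V) (hz : z ∈ Sy \ W)
    (L : List (V × Bool)) (hL : ∀ p ∈ L, p.1 ∈ Sy \ (W ∪ {z})) :
    Indep En Sy φ W →
      Indep En Sy (φ.conj ((LTL.bigConj (L.map LTL.lit)).box)) W := by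
  intro hInd
  set ψ := LTL.bigConj (L.map LTL.lit) with hψ
  have hvarsΛ : (ψ.box).vars ⊆ Sy \ W := by
    intro v hv
    have hv' : v ∈ ψ.vars := by simpa [LTL.box, LTL.vars] using hv
    obtain ⟨p, hp, rfl⟩ := vars_bigConj_lit L hv'
    have h := hL p hp
    exact ⟨h.1, fun hw => h.2 (Or.inl hw)⟩
  have keyΛ : ∀ α γ : Trace V, projT En (Sy \ W) γ = projT En (Sy \ W) α →
      (Sat γ ψ.box ↔ Sat α ψ.box) := by
    intro α γ hp
    apply sat_congr
    intro i v hv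
    have hv' : v ∈ Sy \ W := hvarsΛ hv
    have h1 := congrFun hp i
    constructor
    · intro h
      have h2 : v ∈ projT En (Sy \ W) γ i := mem_projT.mpr ⟨h, Or.inr hv'⟩
      rw [h1] at h2
      exact (mem_projT.mp h2).1
    · intro h
      have h2 : v ∈ projT En (Sy \ W) α i := mem_projT.mpr ⟨h, Or.inr hv'⟩
      rw [← h1] at h2
      exact (mem_projT.mp h2).1
  unfold Indep at hInd ⊢
  apply Set.Subset.antisymm
  · rintro α ⟨hbound, ⟨β, hβ, hβeq⟩, ⟨γ, hγ, hγeq⟩⟩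
    have hβS : Sat β (φ.conj ψ.box) := hβ.1
    have hγS : Sat γ (φ.conj ψ.box) := hγ.1
    have hβM : β ∈ ModelsOver En Sy φ := ⟨hβS.1, hβ.2⟩
    have hγM : γ ∈ ModelsOver En Sy φ := ⟨hγS.1, hγ.2⟩
    have hαM : α ∈ ModelsOver En Sy φ := by
      rw [← hInd]
      exact ⟨hbound, ⟨β, hβM, hβeq⟩, ⟨γ, hγM, hγeq⟩⟩
    have hSatΛ : Sat α ψ.box := (keyΛ α γ hγeq).mp hγS.2
    exact ⟨⟨hαM.1, hSatΛ⟩, hαM.2⟩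
  · intro α hα
    refine ⟨?_, ⟨α, hα, rfl⟩, ⟨α, hα, rfl⟩⟩
    intro i v hv
    rcases hα.2 i hv with h | h
    · exact Or.inl (Or.inl h)
    · by_cases hvW : v ∈ W
      · exact Or.inl (Or.inr hvW)
      · exact Or.inr ⟨h, hvW⟩
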